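/- arXiv:0812.0494 — 4 statements merged into one kernel-verified Lean document; each statement's English description precedes it below -/
import Mathlib

section
/- Let N ≥ 2 and let C be a real symmetric positive definite N×N matrix, with non-diagonality measure δ(C) = (1/(N−1)) · (∑_{r≠c} C_{rc}²) / (∑_{r} C_{rr}²). Then 0 ≤ δ(C) ≤ 1, with δ(C) = 0 if and only if C is diagonal. Moreover the bound 1 is attained in the positive semidefinite closure: for the N×N all-ones matrix J one has δ(J) = 1. -/
open Matrix Finset

/-- The non-diagonality measure `δ(C)` of a real matrix `C`:
`δ(C) = (1/(N−1)) · (∑_{r≠c} C_{rc}²) / (∑_r C_{rr}²)`. -/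
noncomputable def nonDiagonality {N : ℕ} (C : Matrix (Fin N) (Fin N) ℝ) : ℝ :=
  (1 / ((N : ℝ) - 1)) *
    (∑ p ∈ Finset.univ.filter (fun p : Fin N × Fin N => p.1 ≠ p.2), (C p.1 p.2) ^ 2) /
    (∑ r : Fin N, (C r r) ^ 2)

/-!
Every principal 2×2 minor of a positive semidefinite matrix is nonnegative, so
`C_{rc}² ≤ C_{rr} C_{cc}`. Summing over `r ≠ c` bounds the off-diagonal mass by
`(∑_r C_{rr})² - ∑_r C_{rr}²`, and Cauchy–Schwarz `(∑_r C_{rr})² ≤ N ∑_r C_{rr}²` turns this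
into `(N - 1) ∑_r C_{rr}²`. The all-ones matrix makes every inequality an equality.
-/

lemma Finset.sum_offDiag_mul {ι R : Type*} [DecidableEq ι] [CommRing R] (s : Finset ι) (f : ι → R) :
    ∑ p ∈ s.offDiag, f p.1 * f p.2 = (∑ i ∈ s, f i) ^ 2 - ∑ i ∈ s, f i ^ 2 := by
  have hdiag : ∑ p ∈ s.diag, f p.1 * f p.2 = ∑ i ∈ s, f i ^ 2 := by
    simp [Finset.diag, sq]
  rw [sq (∑ i ∈ s, f i), Finset.sum_mul_sum, ← Finset.sum_product', ← Finset.diag_union_offDiag,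
    Finset.sum_union (Finset.disjoint_diag_offDiag s), hdiag]
  ring

lemma Finset.univ_filter_ne_eq_offDiag {ι : Type*} [Fintype ι] [DecidableEq ι] :
    (univ : Finset (ι × ι)).filter (fun p => p.1 ≠ p.2) = univ.offDiag := by
  ext; simp

lemma Matrix.sum_offDiag_sq_eq_zero_iff {ι R : Type*} [Fintype ι] [CommRing R] [LinearOrder R]
    [IsStrictOrderedRing R] {C : Matrix ι ι R} :
    ∑ p ∈ univ.offDiag, C p.1 p.2 ^ 2 = 0 ↔ C.IsDiag := by
  rw [Finset.sum_eq_zero_iff_of_nonneg fun _ _ => sq_nonneg _]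
  simp [Matrix.IsDiag, Pairwise]

lemma Matrix.PosSemidef.sq_apply_le_mul_diag {ι : Type*} {C : Matrix ι ι ℝ} (hC : C.PosSemidef)
    (i j : ι) : C i j ^ 2 ≤ C i i * C j j := by
  have hdet := (hC.submatrix ![i, j]).det_nonneg
  have hsymm : C j i = C i j := by simpa using hC.isHermitian.apply i j
  rw [Matrix.det_fin_two] at hdet
  simpa [sq, hsymm] using hdet

lemma Matrix.PosSemidef.sum_offDiag_sq_le {ι : Type*} [Fintype ι] {C : Matrix ι ι ℝ}
    (hC : C.PosSemidef) :
    ∑ p ∈ univ.offDiag, C p.1 p.2 ^ 2 ≤ (Fintype.card ι - 1) * ∑ i, C i i ^ 2 := by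
  classical
  calc ∑ p ∈ univ.offDiag, C p.1 p.2 ^ 2
      ≤ ∑ p ∈ univ.offDiag, C p.1 p.1 * C p.2 p.2 :=
        Finset.sum_le_sum fun p _ => hC.sq_apply_le_mul_diag p.1 p.2
    _ = (∑ i, C i i) ^ 2 - ∑ i, C i i ^ 2 := Finset.sum_offDiag_mul univ fun i => C i i
    _ ≤ Fintype.card ι * ∑ i, C i i ^ 2 - ∑ i, C i i ^ 2 := by
        gcongr; exact sq_sum_le_card_mul_sum_sq
    _ = (Fintype.card ι - 1) * ∑ i, C i i ^ 2 := by ring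

lemma nonDiagonality_eq {N : ℕ} (C : Matrix (Fin N) (Fin N) ℝ) :
    nonDiagonality C =
      (∑ p ∈ univ.offDiag, C p.1 p.2 ^ 2) / ((N - 1) * ∑ r, C r r ^ 2) := by
  rw [nonDiagonality, Finset.univ_filter_ne_eq_offDiag, one_div_mul_eq_div, div_div]

lemma nonDiagonality_nonneg {N : ℕ} (C : Matrix (Fin N) (Fin N) ℝ) : 0 ≤ nonDiagonality C := by
  rw [nonDiagonality_eq]
  refine div_nonneg (sum_nonneg fun _ _ => sq_nonneg _) ?_
  rcases N with _ | n
  · simp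
  · push_cast
    rw [add_sub_cancel_right]
    positivity

lemma Matrix.PosSemidef.nonDiagonality_le_one {N : ℕ} {C : Matrix (Fin N) (Fin N) ℝ}
    (hC : C.PosSemidef) : nonDiagonality C ≤ 1 := by
  have hle := hC.sum_offDiag_sq_le
  rw [Fintype.card_fin] at hle
  rw [nonDiagonality_eq]
  exact div_le_one_of_le₀ hle ((sum_nonneg fun _ _ => sq_nonneg _).trans hle)

lemma nonDiagonality_eq_zero_iff {N : ℕ} {C : Matrix (Fin N) (Fin N) ℝ}
    (hC : ∑ r, C r r ^ 2 ≠ 0) : nonDiagonality C = 0 ↔ C.IsDiag := by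
  rw [nonDiagonality_eq, div_eq_zero_iff, mul_eq_zero, sub_eq_zero, Nat.cast_eq_one,
    Matrix.sum_offDiag_sq_eq_zero_iff]
  constructor
  · rintro (hdiag | rfl | hzero)
    · exact hdiag
    · exact fun i j hij => absurd (Subsingleton.elim i j) hij
    · exact absurd hzero hC
  · exact Or.inl

lemma nonDiagonality_const {N : ℕ} (hN : 2 ≤ N) {c : ℝ} (hc : c ≠ 0) :
    nonDiagonality (Matrix.of fun _ _ : Fin N => c) = 1 := by
  have hN1 : (N : ℝ) - 1 ≠ 0 := by
    rw [sub_ne_zero, Nat.cast_ne_one]; omega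
  simp only [nonDiagonality_eq, of_apply, sum_const, offDiag_card, card_univ, Fintype.card_fin,
    nsmul_eq_mul, Nat.cast_sub (Nat.le_mul_self N), Nat.cast_mul]
  field_simp

theorem nonDiagonality_bounds_general
    (N : ℕ) (hN : 2 ≤ N) (C : Matrix (Fin N) (Fin N) ℝ)
    (hpd : C.PosDef) :
    0 ≤ nonDiagonality C ∧ nonDiagonality C ≤ 1 ∧
      (nonDiagonality C = 0 ↔ C.IsDiag) ∧
      nonDiagonality (Matrix.of fun _ _ : Fin N => (1 : ℝ)) = 1 := by
  have : Nonempty (Fin N) := ⟨⟨0, by omega⟩⟩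
  have hdiag : ∑ r, C r r ^ 2 ≠ 0 :=
    (sum_pos (fun _ _ => pow_pos hpd.diag_pos 2) univ_nonempty).ne'
  exact ⟨nonDiagonality_nonneg C, hpd.posSemidef.nonDiagonality_le_one,
    nonDiagonality_eq_zero_iff hdiag, nonDiagonality_const hN one_ne_zero⟩

/-- For a real symmetric positive definite `N×N` matrix (`N ≥ 2`), the non-diagonality
measure satisfies `0 ≤ δ(C) ≤ 1`, with `δ(C) = 0` iff `C` is diagonal; and the bound `1`
is attained in the positive semidefinite closure: the all-ones matrix `J` has `δ(J) = 1`. -/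
theorem nonDiagonality_bounds
    (N : ℕ) (hN : 2 ≤ N) (C : Matrix (Fin N) (Fin N) ℝ)
    (hsymm : C.IsSymm) (hpd : C.PosDef) :
    0 ≤ nonDiagonality C ∧ nonDiagonality C ≤ 1 ∧
      (nonDiagonality C = 0 ↔ C.IsDiag) ∧
      nonDiagonality (Matrix.of fun _ _ : Fin N => (1 : ℝ)) = 1 :=
  nonDiagonality_bounds_general N hN C hpd
end

section
/- Let Q be a real orthogonal N×N matrix (Qᵀ Q = I_N), let (D_ν)_{ν ∈ I} be a family of real diagonal N×N matrices such that Q D_ν Qᵀ is diagonal for every ν ∈ I, and suppose the diagonal profiles are pairwise distinguishable: for every i ≠ j there exists ν ∈ I with (D_ν)_{ii} ≠ (D_ν)_{jj}. Then Q is a signed permutation matrix. -/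
open Matrix

/-!
If `M_ν = Q D_ν Qᵀ` is diagonal then `Q D_ν = M_ν Q`, so every nonzero entry `Q i k` forces
`(D_ν)ₖₖ = (M_ν)ᵢᵢ` for all `ν`. Two nonzero entries in one row would give two indices with
the same diagonal profile, so each row of `Q` has at most one nonzero entry. Orthogonality
of the rows then makes that entry `±1` and forces distinct rows to use distinct columns.
-/

namespace Matrix

variable {n R : Type*} [Fintype n] [CommRing R]

lemma mul_transpose_apply_of_row_support {Q : Matrix n n R} {i k : n}
    (hrow : ∀ l, Q i l ≠ 0 → l = k) (j : n) : (Q * Qᵀ) i j = Q i k * Q j k := by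
  rw [mul_apply]
  refine Finset.sum_eq_single k (fun l _ hlk => ?_) (by simp)
  rw [not_ne_iff.mp (mt (hrow l) hlk), zero_mul]

variable [DecidableEq n]

lemma mul_diagonal_eq_diagonal_diag_mul {Q : Matrix n n R} (hQ : Qᵀ * Q = 1) {d : n → R}
    (hdiag : (Q * diagonal d * Qᵀ).IsDiag) :
    Q * diagonal d = diagonal (Q * diagonal d * Qᵀ).diag * Q := by
  rw [hdiag.diagonal_diag, Matrix.mul_assoc _ Qᵀ, hQ, Matrix.mul_one]

lemma eq_of_mul_diagonal_eq_diagonal_mul [IsDomain R] {Q : Matrix n n R} {d m : n → R}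
    (h : Q * diagonal d = diagonal m * Q) {i k : n} (hik : Q i k ≠ 0) : d k = m i := by
  have hik_entry : Q i k * d k = m i * Q i k := by
    simpa only [mul_diagonal, diagonal_mul] using congrFun (congrFun h i) k
  exact mul_left_cancel₀ hik (hik_entry.trans (mul_comm _ _))

lemma row_support_subsingleton_of_isDiag_conj [IsDomain R] {ι : Type*} {Q : Matrix n n R}
    (hQ : Qᵀ * Q = 1) {D : ι → n → R} (hdiag : ∀ ν, (Q * diagonal (D ν) * Qᵀ).IsDiag)
    (hsep : ∀ k l, k ≠ l → ∃ ν, D ν k ≠ D ν l) (i : n) :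
    {k | Q i k ≠ 0}.Subsingleton := by
  intro k hk l hl
  by_contra hkl
  obtain ⟨ν, hν⟩ := hsep k l hkl
  have hcomm := mul_diagonal_eq_diagonal_diag_mul hQ (hdiag ν)
  exact hν ((eq_of_mul_diagonal_eq_diagonal_mul hcomm hk).trans
    (eq_of_mul_diagonal_eq_diagonal_mul hcomm hl).symm)

lemma exists_ne_zero_of_mul_transpose_eq_one [Nontrivial R] {Q : Matrix n n R}
    (hQ : Q * Qᵀ = 1) (i : n) : ∃ k, Q i k ≠ 0 := by
  by_contra! hrow
  have hii := congrFun (congrFun hQ i) i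
  simp [mul_apply, hrow] at hii

lemma exists_signed_perm_of_row_support_subsingleton [IsDomain R] {Q : Matrix n n R}
    (hQ : Q * Qᵀ = 1) (hrow : ∀ i, {k | Q i k ≠ 0}.Subsingleton) :
    ∃ (σ : Equiv.Perm n) (ε : n → R), (∀ i, ε i = 1 ∨ ε i = -1) ∧
      ∀ i j, Q i j = if j = σ i then ε i else 0 := by
  choose σ₀ hσ₀ using exists_ne_zero_of_mul_transpose_eq_one hQ
  have hsupp : ∀ i l, Q i l ≠ 0 → l = σ₀ i := fun i l hl => hrow i hl (hσ₀ i)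
  have hentry : ∀ i j, (1 : Matrix n n R) i j = Q i (σ₀ i) * Q j (σ₀ i) := fun i j => by
    rw [← hQ, mul_transpose_apply_of_row_support (hsupp i)]
  have hinj : Function.Injective σ₀ := by
    intro i j hij
    by_contra hne
    have hzero : Q i (σ₀ i) * Q j (σ₀ i) = 0 := by rw [← hentry, one_apply_ne hne]
    exact mul_ne_zero (hσ₀ i) (hij ▸ hσ₀ j) hzero
  refine ⟨Equiv.ofBijective σ₀ (Finite.injective_iff_bijective.mp hinj), fun i => Q i (σ₀ i),
    fun i => mul_self_eq_one_iff.mp (by rw [← hentry, one_apply_eq]), fun i j => ?_⟩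
  change Q i j = if j = σ₀ i then Q i (σ₀ i) else 0
  split_ifs with hj
  · rw [hj]
  · exact not_ne_iff.mp (mt (hsupp i j) hj)

end Matrix

/-- Identifiability after whitening: if an orthogonal matrix `Q` keeps a family of
diagonal matrices diagonal under congruence, and the diagonal profiles of the family
distinguish every pair of indices, then `Q` is a signed permutation matrix. -/
theorem orthogonal_joint_diagonalizer_is_signed_permutation
    (N : ℕ) (ι : Type*) (Q : Matrix (Fin N) (Fin N) ℝ) (hQ : Qᵀ * Q = 1)
    (D : ι → Fin N → ℝ)
    (hdiag : ∀ ν : ι, (Q * Matrix.diagonal (D ν) * Qᵀ).IsDiag)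
    (hsep : ∀ i j : Fin N, i ≠ j → ∃ ν : ι, D ν i ≠ D ν j) :
    ∃ (σ : Equiv.Perm (Fin N)) (ε : Fin N → ℝ),
      (∀ i, ε i = 1 ∨ ε i = -1) ∧
      ∀ i j, Q i j = if j = σ i then ε i else 0 :=
  exists_signed_perm_of_row_support_subsingleton (mul_eq_one_comm.mp hQ)
    (row_support_subsingleton_of_isDiag_conj hQ hdiag hsep)
end

section
/- Let C₁ be a real symmetric positive definite N×N matrix and C₂ a real N×N matrix. Suppose B and B′ are invertible real N×N matrices with B C₁ Bᵀ = I_N and B′ C₁ B′ᵀ = I_N, such that D = B C₂ Bᵀ is diagonal with pairwise distinct diagonal entries and D′ = B′ C₂ B′ᵀ is diagonal. Then there exists a signed permutation matrix S with B′ = S B; that is, the two-matrix joint diagonalizer is unique up to sign and permutation of its rows. -/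
open Matrix

/-!
Put `M = B' B⁻¹`, so that `B' = M B`. Substituting into the two congruences gives
`M Mᵀ = 1` and `M D Mᵀ = D'`, hence `M D = D' M`. Entrywise this reads
`M i j * d j = d' i * M i j`, so a nonzero entry `M i j` forces `d j = d' i`; as the `d j`
are distinct, every row of `M` has at most one nonzero entry. An orthogonal matrix with this
property is a signed permutation matrix.
-/

namespace Matrix

variable {n R : Type*} [Fintype n] [DecidableEq n]

def IsSignedPerm [Ring R] (S : Matrix n n R) : Prop :=
  ∃ (σ : Equiv.Perm n) (ε : n → R), (∀ i, ε i = 1 ∨ ε i = -1) ∧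
    ∀ i j, S i j = if j = σ i then ε i else 0

theorem eq_of_mul_diagonal_eq_diagonal_mul_s10 [CommRing R] [NoZeroDivisors R]
    {M : Matrix n n R} {d d' : n → R} (h : M * diagonal d = diagonal d' * M)
    {i j : n} (hij : M i j ≠ 0) : d j = d' i := by
  have hentry : M i j * d j = M i j * d' i := by
    simpa only [mul_diagonal, diagonal_mul, mul_comm (d' i)] using congr_fun₂ h i j
  exact mul_left_cancel₀ hij hentry

theorem isSignedPerm_of_mul_transpose_eq_one [CommRing R] [IsDomain R] {M : Matrix n n R}
    (hM : M * Mᵀ = 1) (hrow : ∀ i j k, M i j ≠ 0 → M i k ≠ 0 → j = k) : M.IsSignedPerm := by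
  have hrow_ne : ∀ i, ∃ j, M i j ≠ 0 := by
    intro i
    by_contra! h
    simpa [mul_apply, h] using congr_fun₂ hM i i
  choose σ hσ using hrow_ne
  have hzero : ∀ i j, j ≠ σ i → M i j = 0 := fun i j hj => by
    by_contra h
    exact hj (hrow i j (σ i) h (hσ i))
  have hM_apply : ∀ i i', (M * Mᵀ) i i' = M i (σ i) * M i' (σ i) := fun i i' => by
    rw [mul_apply, Finset.sum_eq_single (σ i) (fun j _ hj => by simp [hzero i j hj])
      (by simp), transpose_apply]
  have hσ_inj : Function.Injective σ := by
    intro i i' hii'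
    by_contra hne
    have h := hM_apply i i'
    rw [hM, one_apply_ne hne, hii'] at h
    exact mul_ne_zero (hii' ▸ hσ i) (hσ i') h.symm
  refine ⟨Equiv.ofBijective σ hσ_inj.bijective_of_finite, fun i => M i (σ i), fun i => ?_,
    fun i j => ?_⟩
  · have h := hM_apply i i
    rw [hM, one_apply_eq] at h
    exact mul_self_eq_one_iff.mp h.symm
  · by_cases hj : j = σ i
    · simp [hj]
    · simp [hj, hzero i j hj]

end Matrix

theorem joint_diagonalizer_unique_up_to_signed_permutation_general
    (N : ℕ) (C₁ C₂ : Matrix (Fin N) (Fin N) ℝ)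
    (B B' : Matrix (Fin N) (Fin N) ℝ) (hB : IsUnit B)
    (hBw : B * C₁ * Bᵀ = 1) (hB'w : B' * C₁ * B'ᵀ = 1)
    (d d' : Fin N → ℝ)
    (hBd : B * C₂ * Bᵀ = Matrix.diagonal d)
    (hB'd : B' * C₂ * B'ᵀ = Matrix.diagonal d')
    (hdist : Function.Injective d) :
    ∃ S : Matrix (Fin N) (Fin N) ℝ,
      (∃ (σ : Equiv.Perm (Fin N)) (ε : Fin N → ℝ),
        (∀ i, ε i = 1 ∨ ε i = -1) ∧
        ∀ i j, S i j = if j = σ i then ε i else 0) ∧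
      B' = S * B := by
  set M := B' * B⁻¹
  have hB'M : B' = M * B := by
    rw [Matrix.mul_assoc, nonsing_inv_mul B ((isUnit_iff_isUnit_det B).mp hB), Matrix.mul_one]
  have hcongr : ∀ X, B' * X * B'ᵀ = M * (B * X * Bᵀ) * Mᵀ := fun X => by
    simp only [hB'M, transpose_mul, Matrix.mul_assoc]
  have hM : M * Mᵀ = 1 := by simpa [hcongr, hBw] using hB'w
  have hcomm : M * diagonal d = diagonal d' * M := by
    rw [← hB'd, hcongr, hBd, Matrix.mul_assoc _ Mᵀ, mul_eq_one_comm.mp hM, Matrix.mul_one]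
  refine ⟨M, isSignedPerm_of_mul_transpose_eq_one hM fun i j k hj hk => hdist ?_, hB'M⟩
  rw [eq_of_mul_diagonal_eq_diagonal_mul_s10 hcomm hj, eq_of_mul_diagonal_eq_diagonal_mul_s10 hcomm hk]

/-- Uniqueness of the two-matrix joint diagonalizer up to sign and permutation of rows:
if `B` and `B'` both whiten `C₁` and diagonalize `C₂` by congruence, and the diagonal
entries of `B C₂ Bᵀ` are pairwise distinct, then `B' = S B` for a signed permutation
matrix `S`. -/
theorem joint_diagonalizer_unique_up_to_signed_permutation
    (N : ℕ) (C₁ C₂ : Matrix (Fin N) (Fin N) ℝ)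
    (h₁symm : C₁.IsSymm) (h₁pd : C₁.PosDef)
    (B B' : Matrix (Fin N) (Fin N) ℝ) (hB : IsUnit B) (hB' : IsUnit B')
    (hBw : B * C₁ * Bᵀ = 1) (hB'w : B' * C₁ * B'ᵀ = 1)
    (d d' : Fin N → ℝ)
    (hBd : B * C₂ * Bᵀ = Matrix.diagonal d)
    (hB'd : B' * C₂ * B'ᵀ = Matrix.diagonal d')
    (hdist : Function.Injective d) :
    ∃ S : Matrix (Fin N) (Fin N) ℝ,
      (∃ (σ : Equiv.Perm (Fin N)) (ε : Fin N → ℝ),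
        (∀ i, ε i = 1 ∨ ε i = -1) ∧
        ∀ i j, S i j = if j = σ i then ε i else 0) ∧
      B' = S * B :=
  joint_diagonalizer_unique_up_to_signed_permutation_general N C₁ C₂ B B' hB hBw hB'w d d' hBd hB'd
    hdist
end

section
/- Let A and B be invertible real N×N matrices and let (Λ_ν)_{ν=1,…,K} be real diagonal N×N matrices such that B (A Λ_ν Aᵀ) Bᵀ is diagonal for every ν. Assume the source profiles are pairwise non-proportional: for every i ≠ j, the vectors ((Λ_ν)_{ii})_{ν=1,…,K} and ((Λ_ν)_{jj})_{ν=1,…,K} in ℝ^K are linearly independent (in particular neither is zero and neither is a scalar multiple of the other). Then the system matrix G = B A is a generalized permutation matrix: there exist a permutation σ of {1, …, N} and nonzero reals λ_1, …, λ_N such that G_{ij} = λ_i if j = σ(i) and G_{ij} = 0 otherwise. -/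
/-!
Write `G = B A`. The congruences `G (diagonal d) Gᵀ` are diagonal for every `d` in the span of
the profiles `Λ ν`, and since a vector space over an infinite field is not a finite union of
proper subspaces, that span contains a weight `d` with no zero entry. Comparing
`G (diagonal d) Gᵀ = E` with `G (diagonal (Λ ν)) Gᵀ = F_ν` (`E` diagonal and invertible)
gives `G (diagonal (Λ ν / d)) = F_ν E⁻¹ G`, so on the support of a row of `G` the ratio
`Λ ν / d` depends only on the row. Two nonzero entries in one row would therefore make two
profiles proportional; hence every row of the invertible matrix `G` has exactly one nonzero
entry, in pairwise distinct columns.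
-/

open Matrix

theorem Submodule.exists_forall_apply_ne_zero {k ι : Type*} [DivisionRing k] [Infinite k]
    [Finite ι] (W : Submodule k (ι → k)) (hW : ∀ i, ∃ w ∈ W, w i ≠ 0) :
    ∃ w ∈ W, ∀ i, w i ≠ 0 := by
  by_contra! h
  have hcover : ⋃ i, (LinearMap.ker ((LinearMap.proj i).comp W.subtype) : Set W) = Set.univ :=
    Set.eq_univ_of_forall fun w => Set.mem_iUnion.2 (h w w.2)
  obtain ⟨i, hi⟩ := Subspace.exists_eq_top_of_iUnion_eq_univ hcover
  obtain ⟨w, hwW, hwi⟩ := hW i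
  exact hwi (LinearMap.congr_fun (LinearMap.ker_eq_top.1 hi) ⟨w, hwW⟩)

namespace Matrix

variable {n : Type*} [Fintype n] [DecidableEq n]

def congrDiagWeights {R : Type*} [CommRing R] (G : Matrix n n R) : Submodule R (n → R) where
  carrier := {d | (G * diagonal d * Gᵀ).IsDiag}
  add_mem' {a b} ha hb := by
    have hab : diagonal (a + b) = diagonal a + diagonal b := (diagonal_add a b).symm
    show (G * diagonal (a + b) * Gᵀ).IsDiag
    simpa only [hab, Matrix.mul_add, Matrix.add_mul] using ha.add hb
  zero_mem' := by
    show (G * diagonal 0 * Gᵀ).IsDiag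
    simpa only [show diagonal (0 : n → R) = 0 from diagonal_zero, Matrix.mul_zero,
      Matrix.zero_mul] using isDiag_zero
  smul_mem' c d hd := by
    show (G * diagonal (c • d) * Gᵀ).IsDiag
    simpa only [diagonal_smul, Matrix.mul_smul, Matrix.smul_mul] using hd.smul c

@[simp]
theorem mem_congrDiagWeights {R : Type*} [CommRing R] {G : Matrix n n R} {d : n → R} :
    d ∈ G.congrDiagWeights ↔ (G * diagonal d * Gᵀ).IsDiag :=
  Iff.rfl

theorem mul_eq_mul_of_mem_congrDiagWeights {K : Type*} [Field K] {G : Matrix n n K}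
    (hG : IsUnit G) {d l : n → K} (hd : ∀ k, d k ≠ 0) (hdG : d ∈ G.congrDiagWeights)
    (hlG : l ∈ G.congrDiagWeights) {i k k' : n} (hk : G i k ≠ 0) (hk' : G i k' ≠ 0) :
    l k * d k' = l k' * d k := by
  set e := diag (G * diagonal d * Gᵀ)
  set f := diag (G * diagonal l * Gᵀ)
  have hE : G * diagonal d * Gᵀ = diagonal e := ((isDiag_iff_diagonal_diag _).1 hdG).symm
  have hF : G * diagonal l * Gᵀ = diagonal f := ((isDiag_iff_diagonal_diag _).1 hlG).symm
  have he : e i ≠ 0 := by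
    have hdet : G.det * (∏ k, d k) * G.det = ∏ k, e k := by
      simpa only [det_mul, det_transpose, det_diagonal] using congrArg det hE
    have hGdet := ((isUnit_iff_isUnit_det G).1 hG).ne_zero
    exact Finset.prod_ne_zero_iff.1 (hdet ▸ by simp [hGdet, Finset.prod_ne_zero_iff, hd])
      i (Finset.mem_univ i)
  have hcomm : diagonal l * Gᵀ * diagonal e = diagonal d * Gᵀ * diagonal f := by
    apply hG.mul_left_cancel
    calc G * (diagonal l * Gᵀ * diagonal e) = diagonal f * diagonal e := by
          rw [← hF]; simp only [Matrix.mul_assoc]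
      _ = diagonal e * diagonal f := by simp only [diagonal_mul_diagonal, mul_comm]
      _ = G * (diagonal d * Gᵀ * diagonal f) := by rw [← hE]; simp only [Matrix.mul_assoc]
  have hentry : ∀ m, G i m ≠ 0 → l m * e i = d m * f i := fun m hm => by
    have h := congrFun (congrFun hcomm m) i
    simp only [mul_diagonal, diagonal_mul, transpose_apply] at h
    exact mul_right_cancel₀ hm (by linear_combination h)
  apply mul_right_cancel₀ he
  linear_combination d k' * hentry k hk - d k * hentry k' hk'

theorem exists_perm_eq_ite_of_isUnit {R : Type*} [CommRing R] [Nontrivial R]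
    {G : Matrix n n R} (hG : IsUnit G) (hrow : ∀ i k k', G i k ≠ 0 → G i k' ≠ 0 → k = k') :
    ∃ (σ : Equiv.Perm n) (lam : n → R), (∀ i, lam i ≠ 0) ∧
      ∀ i j, G i j = if j = σ i then lam i else 0 := by
  have hdet : G.det ≠ 0 := ((isUnit_iff_isUnit_det G).1 hG).ne_zero
  have hrow_ne : ∀ i, ∃ k, G i k ≠ 0 := fun i => by
    by_contra! h
    exact hdet (det_eq_zero_of_row_eq_zero i h)
  have hcol_ne : ∀ k, ∃ i, G i k ≠ 0 := fun k => by
    by_contra! h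
    exact hdet (det_eq_zero_of_column_eq_zero k h)
  choose τ hτ using hrow_ne
  have hτ_surj : Function.Surjective τ := fun k => by
    obtain ⟨i, hi⟩ := hcol_ne k
    exact ⟨i, hrow i _ _ (hτ i) hi⟩
  refine ⟨Equiv.ofBijective τ (Finite.surjective_iff_bijective.1 hτ_surj), fun i => G i (τ i),
    hτ, fun i j => ?_⟩
  rw [Equiv.ofBijective_apply]
  split_ifs with hj
  · rw [hj]
  · by_contra hij
    exact hj (hrow i _ _ hij (hτ i))

end Matrix

/-- SOS identifiability: if `B` jointly diagonalizes all the sensor-space statistics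
`A Λ_ν Aᵀ` of mutually uncorrelated sources whose statistical profiles are pairwise
non-proportional (linearly independent in ℝ^K), then the system matrix `G = B A` is a
generalized permutation matrix (a nonzero scaling composed with a permutation). -/
theorem system_matrix_is_generalized_permutation
    (N K : ℕ)
    (A B : Matrix (Fin N) (Fin N) ℝ) (hA : IsUnit A) (hB : IsUnit B)
    (Λ : Fin K → Fin N → ℝ)
    (hdiag : ∀ ν : Fin K, (B * (A * Matrix.diagonal (Λ ν) * Aᵀ) * Bᵀ).IsDiag)
    (hind : ∀ i j : Fin N, i ≠ j →
      LinearIndependent ℝ ![fun ν : Fin K => Λ ν i, fun ν : Fin K => Λ ν j]) :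
    ∃ (σ : Equiv.Perm (Fin N)) (lam : Fin N → ℝ),
      (∀ i, lam i ≠ 0) ∧
      ∀ i j, (B * A) i j = if j = σ i then lam i else 0 := by
  have hG : IsUnit (B * A) := hB.mul hA
  have hΛ : ∀ ν, Λ ν ∈ (B * A).congrDiagWeights := fun ν => by
    simpa only [mem_congrDiagWeights, Matrix.mul_assoc, transpose_mul] using hdiag ν
  refine exists_perm_eq_ite_of_isUnit hG fun i k k' hk hk' => ?_
  by_contra hkk'
  have hprofile : ∀ j, ∃ ν, Λ ν j ≠ 0 := fun j => by
    have hj : j ≠ if j = k then k' else k := by split_ifs with h <;> [exact h ▸ hkk'; exact h]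
    simpa [Function.ne_iff] using (hind _ _ hj).ne_zero 0
  obtain ⟨d, hdW, hd⟩ := (B * A).congrDiagWeights.exists_forall_apply_ne_zero fun j => by
    obtain ⟨ν, hν⟩ := hprofile j
    exact ⟨Λ ν, hΛ ν, hν⟩
  have hprop : ∀ ν, Λ ν k * d k' = Λ ν k' * d k := fun ν =>
    mul_eq_mul_of_mem_congrDiagWeights hG hd hdW (hΛ ν) hk hk'
  refine hd k' (LinearIndependent.pair_iff.1 (hind k k' hkk') (d k') (-d k) ?_).1
  funext ν
  simp only [Pi.add_apply, Pi.smul_apply, smul_eq_mul, Pi.zero_apply]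
  linear_combination hprop ν
end
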